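/- arXiv:2204.10642 — 3 statements merged into one kernel-verified Lean document; each statement's English description precedes it below -/
import Mathlib

section
/- Let N ≥ 1 and let (a_1, …, a_N) ∈ ℝ^N and A, C > 0 satisfy: (1) Σ_{i=1}^N a_i = 0; (2) Σ_{i=1}^N a_i² ≤ C; (3) |a_i| ≤ A for each 1 ≤ i ≤ N. If Z_1, …, Z_N are independent standard real Gaussian random variables, then for every t > 0 one has P(|Σ_{i=1}^N a_i·Z_i²| ≥ t) ≤ 2·(A·t/C + 1)^{C/(2A²)}·exp(−t/(2A)). -/
/-!
Chernoff's method. For a standard Gaussian `Z` and `c < 1/2`, `E exp (c Z²) = (1 - 2c)^(-1/2)`,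
so by independence the cumulant generating function of `∑ aᵢ Zᵢ²` at `λ` is
`∑ -log (1 - 2λaᵢ) / 2`. Write `-log (1 - x) = x + φ(x)`: the linear terms cancel because
`∑ aᵢ = 0`, and `φ(x) / x²` is increasing in `|x|` (its power series has nonnegative
coefficients), so the sum is at most `C / (2A²) · φ(2λA)`. The minimizing choice
`λ = t / (2(At + C))` gives the upper tail bound, and applying it to `-a` as well gives the
two-sided one.
-/

open MeasureTheory ProbabilityTheory Real

-- For `c ≥ 1/2` both sides are junk `0`: the integrand is not integrable and `√(1 - 2c) = 0`.
theorem integral_exp_mul_sq_gaussianReal (c : ℝ) :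
    ∫ x, exp (c * x ^ 2) ∂gaussianReal 0 1 = (√(1 - 2 * c))⁻¹ := by
  have hpdf : ∀ x, gaussianPDFReal 0 1 x • exp (c * x ^ 2)
      = (√(2 * π))⁻¹ * exp (-(1 / 2 - c) * x ^ 2) := fun x => by
    simp only [gaussianPDFReal, NNReal.coe_one, mul_one, sub_zero, smul_eq_mul]
    rw [mul_assoc, ← exp_add]
    congr 2
    ring
  rw [integral_gaussianReal_eq_integral_smul one_ne_zero]
  simp_rw [hpdf]
  rw [integral_const_mul, integral_gaussian, ← sqrt_inv, ← sqrt_inv, ← sqrt_mul (by positivity)]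
  congr 1
  field_simp

theorem integrable_exp_mul_sq_gaussianReal {c : ℝ} (hc : c < 1 / 2) :
    Integrable (fun x => exp (c * x ^ 2)) (gaussianReal 0 1) :=
  .of_integral_ne_zero <| by
    rw [integral_exp_mul_sq_gaussianReal]
    exact inv_ne_zero (sqrt_ne_zero'.2 (by linarith))

section StandardGaussian

variable {Ω : Type*} [MeasurableSpace Ω] {μ : Measure Ω} {Z : Ω → ℝ}

theorem integrable_exp_mul_sq_of_map_eq_gaussianReal (hZ : Measurable Z)
    (hgauss : μ.map Z = gaussianReal 0 1) {c : ℝ} (hc : c < 1 / 2) :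
    Integrable (fun ω => exp (c * Z ω ^ 2)) μ := by
  have h := integrable_exp_mul_sq_gaussianReal hc
  rw [← hgauss] at h
  exact h.comp_measurable hZ

theorem cgf_sq_of_map_eq_gaussianReal (hZ : Measurable Z)
    (hgauss : μ.map Z = gaussianReal 0 1) {c : ℝ} (hc : c < 1 / 2) :
    cgf (fun ω => Z ω ^ 2) μ c = -log (1 - 2 * c) / 2 := by
  have hmap : mgf (fun ω => Z ω ^ 2) μ c = ∫ x, exp (c * x ^ 2) ∂μ.map Z :=
    (integral_map (f := fun x => exp (c * x ^ 2)) hZ.aemeasurable (by fun_prop)).symm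
  rw [cgf, hmap, hgauss, integral_exp_mul_sq_gaussianReal, log_inv,
    log_sqrt (by linarith), neg_div]

end StandardGaussian

theorem hasSum_neg_log_one_sub_sub {x : ℝ} (hx : |x| < 1) :
    HasSum (fun n : ℕ => x ^ (n + 2) / (n + 2)) (-log (1 - x) - x) := by
  have hshift : (fun n : ℕ => x ^ (n + 2) / (n + 2 : ℝ))
      = fun n => x ^ (n + 1 + 1) / (((n + 1 : ℕ) : ℝ) + 1) := by
    ext n; push_cast; ring
  rw [hshift]
  simpa using (hasSum_nat_add_iff' 1).2 (hasSum_pow_div_log_of_abs_lt_one hx)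

theorem neg_log_one_sub_sub_mul_sq_le {x y : ℝ} (hxy : |x| ≤ y) (hy : y < 1) :
    (-log (1 - x) - x) * y ^ 2 ≤ (-log (1 - y) - y) * x ^ 2 := by
  have hy0 : 0 ≤ y := (abs_nonneg x).trans hxy
  refine hasSum_le (fun n => ?_) ((hasSum_neg_log_one_sub_sub (hxy.trans_lt hy)).mul_right _)
    ((hasSum_neg_log_one_sub_sub (by rwa [abs_of_nonneg hy0])).mul_right _)
  have key : x ^ (n + 2) * y ^ 2 ≤ y ^ (n + 2) * x ^ 2 :=
    calc x ^ (n + 2) * y ^ 2 ≤ |x| ^ (n + 2) * y ^ 2 :=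
          mul_le_mul_of_nonneg_right ((le_abs_self _).trans (abs_pow x _).le) (sq_nonneg y)
      _ = |x| ^ n * x ^ 2 * y ^ 2 := by rw [pow_add, sq_abs]
      _ ≤ y ^ n * x ^ 2 * y ^ 2 := by gcongr
      _ = y ^ (n + 2) * x ^ 2 := by ring
  rw [div_mul_eq_mul_div, div_mul_eq_mul_div]
  gcongr

theorem sum_neg_log_one_sub_mul_sq_le {ι : Type*} (s : Finset ι) (x : ι → ℝ)
    (hx : ∑ i ∈ s, x i = 0) {y : ℝ} (hxy : ∀ i ∈ s, |x i| ≤ y) (hy : y < 1) :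
    (∑ i ∈ s, -log (1 - x i)) * y ^ 2 ≤ (-log (1 - y) - y) * ∑ i ∈ s, x i ^ 2 :=
  calc (∑ i ∈ s, -log (1 - x i)) * y ^ 2 = ∑ i ∈ s, (-log (1 - x i) - x i) * y ^ 2 := by
        rw [← Finset.sum_mul, Finset.sum_sub_distrib, hx, sub_zero]
    _ ≤ ∑ i ∈ s, (-log (1 - y) - y) * x i ^ 2 :=
        Finset.sum_le_sum fun i hi => neg_log_one_sub_sub_mul_sq_le (hxy i hi) hy
    _ = (-log (1 - y) - y) * ∑ i ∈ s, x i ^ 2 := by rw [Finset.mul_sum]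

section WeightedChiSquared

variable {Ω ι : Type*} [MeasurableSpace Ω] {μ : Measure Ω} [Fintype ι]

theorem measureReal_sum_mul_sq_ge_le [IsProbabilityMeasure μ] {Z : ι → Ω → ℝ}
    (hmeas : ∀ i, Measurable (Z i)) (hindep : iIndepFun Z μ)
    (hgauss : ∀ i, μ.map (Z i) = gaussianReal 0 1) (a : ι → ℝ) {l : ℝ} (hl : 0 ≤ l)
    (hla : ∀ i, a i * l < 1 / 2) (t : ℝ) :
    μ.real {ω | t ≤ ∑ i, a i * Z i ω ^ 2}
      ≤ exp (-l * t + ∑ i, -log (1 - 2 * (a i * l)) / 2) := by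
  set X : ι → Ω → ℝ := fun i ω => a i * Z i ω ^ 2 with hX
  have hXmeas : ∀ i, Measurable (X i) := fun i => by fun_prop
  have hXindep : iIndepFun X μ := hindep.comp (fun i x => a i * x ^ 2) (fun i => by fun_prop)
  have hint : ∀ i ∈ Finset.univ, Integrable (fun ω => exp (l * X i ω)) μ := fun i _ => by
    simpa only [hX, mul_left_comm l, ← mul_assoc] using
      integrable_exp_mul_sq_of_map_eq_gaussianReal (hmeas i) (hgauss i) (hla i)
  have hcgf : ∀ i, cgf (X i) μ l = -log (1 - 2 * (a i * l)) / 2 := fun i => by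
    rw [cgf, mgf_const_mul, ← cgf, cgf_sq_of_map_eq_gaussianReal (hmeas i) (hgauss i) (hla i)]
  have hchernoff := measure_ge_le_exp_cgf t hl (hXindep.integrable_exp_mul_sum hXmeas hint)
  rw [hXindep.cgf_sum hXmeas hint, Finset.sum_congr rfl fun i _ => hcgf i] at hchernoff
  simpa only [Finset.sum_apply, hX] using hchernoff

theorem sum_neg_log_one_sub_two_mul_le {a : ι → ℝ} {A C l : ℝ} (hA : 0 < A) (hl : 0 < l)
    (ha1 : ∑ i, a i = 0) (ha2 : ∑ i, a i ^ 2 ≤ C) (ha3 : ∀ i, |a i| ≤ A)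
    (hAl : 2 * (A * l) < 1) :
    ∑ i, -log (1 - 2 * (a i * l)) / 2
      ≤ C / (2 * A ^ 2) * (-log (1 - 2 * (A * l)) - 2 * (A * l)) := by
  have hφ : 0 ≤ -log (1 - 2 * (A * l)) - 2 * (A * l) := by
    linarith [log_le_sub_one_of_pos (show 0 < 1 - 2 * (A * l) by linarith)]
  have hxy : ∀ i ∈ Finset.univ, |2 * (a i * l)| ≤ 2 * (A * l) := fun i _ => by
    rw [abs_mul, abs_mul, abs_two, abs_of_pos hl]
    gcongr
    exact ha3 i
  have hmain := sum_neg_log_one_sub_mul_sq_le Finset.univ (fun i => 2 * (a i * l))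
    (by simp only [← Finset.mul_sum, ← Finset.sum_mul, ha1, zero_mul, mul_zero]) hxy hAl
  have hl2 : 0 < 4 * l ^ 2 := by positivity
  have hkey : (∑ i, -log (1 - 2 * (a i * l))) * A ^ 2
      ≤ (-log (1 - 2 * (A * l)) - 2 * (A * l)) * C := by
    refine le_of_mul_le_mul_right ?_ hl2
    calc (∑ i, -log (1 - 2 * (a i * l))) * A ^ 2 * (4 * l ^ 2)
        = (∑ i, -log (1 - 2 * (a i * l))) * (2 * (A * l)) ^ 2 := by ring
      _ ≤ (-log (1 - 2 * (A * l)) - 2 * (A * l)) * ∑ i, (2 * (a i * l)) ^ 2 := hmain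
      _ = (-log (1 - 2 * (A * l)) - 2 * (A * l)) * (∑ i, a i ^ 2) * (4 * l ^ 2) := by
        simp only [Finset.mul_sum, Finset.sum_mul]
        exact Finset.sum_congr rfl fun i _ => by ring
      _ ≤ (-log (1 - 2 * (A * l)) - 2 * (A * l)) * C * (4 * l ^ 2) := by gcongr
  calc ∑ i, -log (1 - 2 * (a i * l)) / 2
      = (∑ i, -log (1 - 2 * (a i * l))) * A ^ 2 / (2 * A ^ 2) := by
        rw [← Finset.sum_div, mul_div_mul_right _ _ (by positivity)]
    _ ≤ (-log (1 - 2 * (A * l)) - 2 * (A * l)) * C / (2 * A ^ 2) := by gcongr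
    _ = C / (2 * A ^ 2) * (-log (1 - 2 * (A * l)) - 2 * (A * l)) := by ring

theorem measureReal_sum_mul_sq_ge_le_of_sum_eq_zero [IsProbabilityMeasure μ] {Z : ι → Ω → ℝ}
    (hmeas : ∀ i, Measurable (Z i)) (hindep : iIndepFun Z μ)
    (hgauss : ∀ i, μ.map (Z i) = gaussianReal 0 1) {a : ι → ℝ} {A C : ℝ} (hA : 0 < A)
    (hC : 0 < C) (ha1 : ∑ i, a i = 0) (ha2 : ∑ i, a i ^ 2 ≤ C) (ha3 : ∀ i, |a i| ≤ A)
    {t : ℝ} (ht : 0 < t) :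
    μ.real {ω | t ≤ ∑ i, a i * Z i ω ^ 2}
      ≤ (A * t / C + 1) ^ (C / (2 * A ^ 2)) * exp (-(t / (2 * A))) := by
  have hAtC : 0 < A * t + C := by positivity
  set l := t / (2 * (A * t + C)) with hl_def
  have hl : 0 < l := by positivity
  have hy : 2 * (A * l) = A * t / (A * t + C) := by rw [hl_def]; field_simp
  have hy1 : 2 * (A * l) < 1 := by rw [hy, div_lt_one hAtC]; linarith
  have hla : ∀ i, a i * l < 1 / 2 := fun i => by
    nlinarith [(abs_le.1 (ha3 i)).2]
  have hlog : -log (1 - 2 * (A * l)) = log (A * t / C + 1) := by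
    have h : 1 - A * t / (A * t + C) = (A * t / C + 1)⁻¹ := by
      field_simp
      ring
    rw [hy, h, log_inv, neg_neg]
  have hlin : -l * t - C / (2 * A ^ 2) * (2 * (A * l)) = -(t / (2 * A)) := by
    rw [hl_def]
    field_simp
    ring
  calc μ.real {ω | t ≤ ∑ i, a i * Z i ω ^ 2}
      ≤ exp (-l * t + ∑ i, -log (1 - 2 * (a i * l)) / 2) :=
        measureReal_sum_mul_sq_ge_le hmeas hindep hgauss a hl.le hla t
    _ ≤ exp (-l * t + C / (2 * A ^ 2) * (-log (1 - 2 * (A * l)) - 2 * (A * l))) :=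
        exp_le_exp.2 (by linarith [sum_neg_log_one_sub_two_mul_le hA hl ha1 ha2 ha3 hy1])
    _ = (A * t / C + 1) ^ (C / (2 * A ^ 2)) * exp (-(t / (2 * A))) := by
        rw [rpow_def_of_pos (by positivity), ← exp_add, ← hlog]
        congr 1
        linear_combination hlin

end WeightedChiSquared

theorem stmt_8_general {Ω : Type} [MeasurableSpace Ω]
    (μ : Measure Ω) [IsProbabilityMeasure μ]
    (N : ℕ)
    (a : Fin N → ℝ) (A C : ℝ) (hA : 0 < A) (hC : 0 < C)
    (ha1 : ∑ i, a i = 0)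
    (ha2 : ∑ i, a i ^ 2 ≤ C)
    (ha3 : ∀ i, |a i| ≤ A)
    (Z : Fin N → Ω → ℝ)
    (hmeas : ∀ i, Measurable (Z i))
    (hindep : iIndepFun Z μ)
    (hgauss : ∀ i, Measure.map (Z i) μ = gaussianReal 0 1)
    (t : ℝ) (ht : 0 < t) :
    μ {ω | t ≤ |∑ i, a i * Z i ω ^ 2|} ≤
      ENNReal.ofReal (2 * (A * t / C + 1) ^ (C / (2 * A ^ 2)) * Real.exp (-(t / (2 * A)))) := by
  have hupper := measureReal_sum_mul_sq_ge_le_of_sum_eq_zero hmeas hindep hgauss hA hC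
    ha1 ha2 ha3 ht
  have hlower := measureReal_sum_mul_sq_ge_le_of_sum_eq_zero (a := fun i => -a i) hmeas hindep
    hgauss hA hC (by simp [ha1]) (by simpa using ha2) (by simpa using ha3) ht
  have hsplit : {ω | t ≤ |∑ i, a i * Z i ω ^ 2|}
      ⊆ {ω | t ≤ ∑ i, a i * Z i ω ^ 2} ∪ {ω | t ≤ ∑ i, -a i * Z i ω ^ 2} := fun ω hω => by
    simp only [Set.mem_union, Set.mem_ofPred_eq, neg_mul, Finset.sum_neg_distrib] at hω ⊢
    exact le_abs.1 hω
  rw [← ofReal_measureReal]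
  refine ENNReal.ofReal_le_ofReal ?_
  calc μ.real {ω | t ≤ |∑ i, a i * Z i ω ^ 2|}
      ≤ μ.real {ω | t ≤ ∑ i, a i * Z i ω ^ 2} + μ.real {ω | t ≤ ∑ i, -a i * Z i ω ^ 2} :=
        (measureReal_mono hsplit).trans (measureReal_union_le _ _)
    _ ≤ 2 * (A * t / C + 1) ^ (C / (2 * A ^ 2)) * exp (-(t / (2 * A))) := by
        linarith

/-- Large deviations estimate for weighted sums of independent `χ²₁` random variables
(squares of standard Gaussians), with zero-sum weights. -/
theorem stmt_8 {Ω : Type} [MeasurableSpace Ω]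
    (μ : Measure Ω) [IsProbabilityMeasure μ]
    (N : ℕ) (hN : 1 ≤ N)
    (a : Fin N → ℝ) (A C : ℝ) (hA : 0 < A) (hC : 0 < C)
    (ha1 : ∑ i, a i = 0)
    (ha2 : ∑ i, a i ^ 2 ≤ C)
    (ha3 : ∀ i, |a i| ≤ A)
    (Z : Fin N → Ω → ℝ)
    (hmeas : ∀ i, Measurable (Z i))
    (hindep : iIndepFun Z μ)
    (hgauss : ∀ i, Measure.map (Z i) μ = gaussianReal 0 1)
    (t : ℝ) (ht : 0 < t) :
    μ {ω | t ≤ |∑ i, a i * Z i ω ^ 2|} ≤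
      ENNReal.ofReal (2 * (A * t / C + 1) ^ (C / (2 * A ^ 2)) * Real.exp (-(t / (2 * A)))) :=
  stmt_8_general μ N a A C hA hC ha1 ha2 ha3 Z hmeas hindep hgauss t ht
end

section
/- Let G be a finite group, let (π, V) be an irreducible unitary representation of G on a finite-dimensional complex Hilbert space V, let v ∈ V be a unit vector, and let f : G → ℝ. Then ((dim V)²/|G|²)·Σ_{g∈G} Σ_{h∈G} f(g)·f(h)·|⟨π(g)v, π(h)v⟩|² ≤ (dim V/|G|)·Σ_{g∈G} f(g)². -/
open scoped BigOperators ComplexInnerProductSpace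

section Aux

variable {V : Type} [NormedAddCommGroup V] [InnerProductSpace ℂ V]

noncomputable def rankOneOp (v : V) : V →ₗ[ℂ] V where
  toFun x := ⟪v, x⟫ • v
  map_add' x y := by simp [inner_add_right, add_smul]
  map_smul' c x := by simp [inner_smul_right, smul_smul]

@[simp] lemma rankOneOp_apply (v x : V) : rankOneOp v x = ⟪v, x⟫ • v := rfl

lemma trace_rankOneOp [FiniteDimensional ℂ V] (v : V) :
    LinearMap.trace ℂ V (rankOneOp v) = ⟪v, v⟫ := by
  classical
  set b := stdOrthonormalBasis ℂ V
  rw [LinearMap.trace_eq_matrix_trace ℂ b.toBasis, Matrix.trace]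
  simp only [Matrix.diag, LinearMap.toMatrix_apply, OrthonormalBasis.coe_toBasis,
    OrthonormalBasis.coe_toBasis_repr_apply, OrthonormalBasis.repr_apply_apply,
    rankOneOp_apply, inner_smul_right]
  rw [← b.sum_inner_mul_inner v v]

end Aux

/-- A representation is irreducible if its only invariant subspaces are `⊥` and `⊤`. -/
def RepIrreducible {G : Type*} [Group G] {W : Type*} [AddCommGroup W] [Module ℂ W]
    (ρ : Representation ℂ G W) : Prop :=
  ∀ U : Submodule ℂ W, (∀ g : G, ∀ x ∈ U, ρ g x ∈ U) → U = ⊥ ∨ U = ⊤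

section Main

variable {G : Type} [Group G] [Fintype G]
    {V : Type} [NormedAddCommGroup V] [InnerProductSpace ℂ V] [FiniteDimensional ℂ V]

lemma schur_sum (π : Representation ℂ G V)
    (hirr : RepIrreducible π)
    (v : V) (hv : ‖v‖ = 1) :
    (∑ h : G, (π h * rankOneOp v * π h⁻¹ : V →ₗ[ℂ] V))
      = ((Fintype.card G : ℂ) / (Module.finrank ℂ V : ℂ)) • (1 : V →ₗ[ℂ] V) := by
  classical
  have hv0 : v ≠ 0 := by
    intro h; rw [h, norm_zero] at hv; norm_num at hv
  have : Nontrivial V := nontrivial_of_ne v 0 hv0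
  set S : V →ₗ[ℂ] V := ∑ h : G, (π h * rankOneOp v * π h⁻¹ : V →ₗ[ℂ] V) with hS
  have hπmul : ∀ a b : G, π a * π b = π (a * b) := fun a b => (map_mul π a b).symm
  have hcomm : ∀ g : G, π g * S = S * π g := by
    intro g
    rw [hS, Finset.mul_sum, Finset.sum_mul]
    rw [← Fintype.sum_equiv (Equiv.mulLeft g) _ (fun h => (π h * rankOneOp v * π h⁻¹) * π g)]
    intro h
    show π g * (π h * rankOneOp v * π h⁻¹) = π (g * h) * rankOneOp v * π (g * h)⁻¹ * π g
    have h1 : π (g * h)⁻¹ * π g = π h⁻¹ := by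
      rw [hπmul]; congr 1; group
    rw [mul_assoc (π (g*h) * rankOneOp v), h1, ← hπmul g h]
    simp [mul_assoc]
  obtain ⟨μ, hμ⟩ := Module.End.exists_eigenvalue S
  have hST : ∀ x : V, S x = μ • x := by
    have hU := hirr (Module.End.eigenspace S μ) ?_
    · rcases hU with hU | hU
      · exact absurd hU hμ
      · intro x
        have : x ∈ Module.End.eigenspace S μ := hU ▸ Submodule.mem_top
        exact (Module.End.mem_eigenspace_iff).1 this
    · intro g x hx
      rw [Module.End.mem_eigenspace_iff] at hx ⊢
      have : (S * π g) x = (π g * S) x := by rw [hcomm]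
      calc S (π g x) = (S * π g) x := rfl
        _ = (π g * S) x := this
        _ = π g (S x) := rfl
        _ = π g (μ • x) := by rw [hx]
        _ = μ • π g x := map_smul _ _ _
  have hSeq : S = μ • (1 : V →ₗ[ℂ] V) := by
    ext x; simpa using hST x
  have htrT : LinearMap.trace ℂ V (rankOneOp v) = 1 := by
    rw [trace_rankOneOp, @inner_self_eq_norm_sq_to_K ℂ, hv]; norm_num
  have htrS : LinearMap.trace ℂ V S = (Fintype.card G : ℂ) := by
    rw [hS, map_sum]
    have : ∀ h : G, LinearMap.trace ℂ V (π h * rankOneOp v * π h⁻¹)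
        = LinearMap.trace ℂ V (rankOneOp v) := by
      intro h
      rw [mul_assoc, LinearMap.trace_mul_comm, mul_assoc, hπmul, inv_mul_cancel, map_one,
        mul_one]
    simp [this, htrT]
  have htrS' : LinearMap.trace ℂ V S = μ * (Module.finrank ℂ V : ℂ) := by
    rw [hSeq, map_smul, LinearMap.trace_one]; rfl
  have hd : (Module.finrank ℂ V : ℂ) ≠ 0 := by
    exact_mod_cast (Module.finrank_pos (R := ℂ) (M := V)).ne'
  have hμval : μ = (Fintype.card G : ℂ) / (Module.finrank ℂ V : ℂ) := by
    field_simp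
    rw [← htrS', htrS]
  rw [hSeq, hμval]

lemma sum_inner_sq (π : Representation ℂ G V)
    (hunitary : ∀ (g : G) (x y : V), ⟪π g x, π g y⟫ = ⟪x, y⟫)
    (hirr : RepIrreducible π)
    (v : V) (hv : ‖v‖ = 1) (x : V) (hx : ‖x‖ = 1) :
    ∑ h : G, ‖⟪π h v, x⟫‖ ^ 2
      = (Fintype.card G : ℝ) / (Module.finrank ℂ V : ℝ) := by
  have hs := schur_sum π hirr v hv
  have hmain := congrArg (fun T : V →ₗ[ℂ] V => (⟪x, T x⟫ : ℂ)) hs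
  simp only [LinearMap.sum_apply, inner_sum, LinearMap.smul_apply, Module.End.one_apply,
    inner_smul_right] at hmain
  have hterm : ∀ h : G, (⟪x, (π h * rankOneOp v * π h⁻¹) x⟫ : ℂ)
      = ((‖⟪π h v, x⟫‖ ^ 2 : ℝ) : ℂ) := by
    intro h
    have hinv : π h ((π h⁻¹) x) = x := by
      have : (π h * π h⁻¹) x = x := by
        rw [← map_mul, mul_inv_cancel, map_one]; rfl
      exact this
    have hkey : (⟪v, (π h⁻¹) x⟫ : ℂ) = ⟪π h v, x⟫ := by
      conv_rhs => rw [← hinv]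
      rw [hunitary h v ((π h⁻¹) x)]
    have : (π h * rankOneOp v * π h⁻¹) x = ⟪v, (π h⁻¹) x⟫ • π h v := by
      simp [Module.End.mul_apply, map_smul]
    rw [this, inner_smul_right, hkey, ← inner_conj_symm x (π h v), Complex.mul_conj]
    simp [Complex.normSq_eq_norm_sq]
  rw [Finset.sum_congr rfl (fun h _ => hterm h)] at hmain
  have hxx : (⟪x, x⟫ : ℂ) = 1 := by
    rw [@inner_self_eq_norm_sq_to_K ℂ, hx]; norm_num
  rw [hxx, mul_one] at hmain
  have hfin : ((∑ h : G, ‖⟪π h v, x⟫‖ ^ 2 : ℝ) : ℂ)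
      = (((Fintype.card G : ℝ) / (Module.finrank ℂ V : ℝ) : ℝ) : ℂ) := by
    push_cast
    convert hmain using 2 with h
    push_cast
    ring
  exact Complex.ofReal_injective hfin

end Main

/-- Lemma 6.1(i), first part: Hilbert–Schmidt norm bound via Schur orthogonality. -/
theorem stmt_13 {G : Type} [Group G] [Fintype G]
    {V : Type} [NormedAddCommGroup V] [InnerProductSpace ℂ V] [FiniteDimensional ℂ V]
    (π : Representation ℂ G V)
    (hunitary : ∀ (g : G) (x y : V), ⟪π g x, π g y⟫ = ⟪x, y⟫)
    (hirr : RepIrreducible π)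
    (v : V) (hv : ‖v‖ = 1)
    (f : G → ℝ) :
    (Module.finrank ℂ V : ℝ) ^ 2 / (Fintype.card G : ℝ) ^ 2 *
        ∑ g : G, ∑ h : G, f g * f h * ‖⟪π h v, π g v⟫‖ ^ 2 ≤
      (Module.finrank ℂ V : ℝ) / (Fintype.card G : ℝ) * ∑ g : G, f g ^ 2 := by
  classical
  have hv0 : v ≠ 0 := by
    intro h; rw [h, norm_zero] at hv; norm_num at hv
  have : Nontrivial V := nontrivial_of_ne v 0 hv0
  set N : ℝ := (Fintype.card G : ℝ) with hN
  set d : ℝ := (Module.finrank ℂ V : ℝ) with hd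
  have hNpos : 0 < N := by rw [hN]; exact_mod_cast Fintype.card_pos
  have hdpos : 0 < d := by rw [hd]; exact_mod_cast Module.finrank_pos (R := ℂ) (M := V)
  set c : G → G → ℝ := fun g h => ‖⟪π h v, π g v⟫‖ ^ 2 with hc
  have hcnn : ∀ g h, 0 ≤ c g h := fun g h => sq_nonneg _
  have hcsymm : ∀ g h, c g h = c h g := by
    intro g h
    simp only [hc]
    rw [← inner_conj_symm (π g v) (π h v), RCLike.norm_conj]
  have hunit : ∀ g : G, ‖π g v‖ = 1 := by
    intro g
    have h1 : (⟪π g v, π g v⟫ : ℂ) = ⟪v, v⟫ := hunitary g v v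
    rw [@inner_self_eq_norm_sq_to_K ℂ, @inner_self_eq_norm_sq_to_K ℂ] at h1
    have h2 : ‖π g v‖ ^ 2 = ‖v‖ ^ 2 := by exact_mod_cast h1
    nlinarith [norm_nonneg (π g v), norm_nonneg v, hv]
  have key : ∀ g : G, ∑ h : G, c g h = N / d := by
    intro g
    exact sum_inner_sq π hunitary hirr v hv (π g v) (hunit g)
  have key' : ∀ h : G, ∑ g : G, c g h = N / d := by
    intro h
    rw [Finset.sum_congr rfl fun g _ => hcsymm g h]
    exact key h
  have h1 : ∑ g : G, ∑ h : G, f g * f h * c g h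
      ≤ ∑ g : G, ∑ h : G, (f g ^ 2 / 2 + f h ^ 2 / 2) * c g h := by
    apply Finset.sum_le_sum; intro g _
    apply Finset.sum_le_sum; intro h _
    apply mul_le_mul_of_nonneg_right _ (hcnn g h)
    nlinarith [sq_nonneg (f g - f h)]
  have h2 : ∑ g : G, ∑ h : G, (f g ^ 2 / 2 + f h ^ 2 / 2) * c g h
      = (N / d) * ∑ g : G, f g ^ 2 := by
    have e1 : ∑ g : G, ∑ h : G, (f g ^ 2 / 2) * c g h = (N / d) / 2 * ∑ g : G, f g ^ 2 := by
      rw [Finset.mul_sum]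
      refine Finset.sum_congr rfl fun g _ => ?_
      rw [← Finset.mul_sum, key g]; ring
    have e2 : ∑ g : G, ∑ h : G, (f h ^ 2 / 2) * c g h = (N / d) / 2 * ∑ g : G, f g ^ 2 := by
      rw [Finset.sum_comm, Finset.mul_sum]
      refine Finset.sum_congr rfl fun h _ => ?_
      rw [← Finset.mul_sum, key' h]; ring
    calc ∑ g : G, ∑ h : G, (f g ^ 2 / 2 + f h ^ 2 / 2) * c g h
        = ∑ g : G, ∑ h : G, ((f g ^ 2 / 2) * c g h + (f h ^ 2 / 2) * c g h) := by
          simp [add_mul]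
      _ = (∑ g : G, ∑ h : G, (f g ^ 2 / 2) * c g h)
            + ∑ g : G, ∑ h : G, (f h ^ 2 / 2) * c g h := by
          rw [← Finset.sum_add_distrib]
          exact Finset.sum_congr rfl fun g _ => Finset.sum_add_distrib
      _ = (N / d) * ∑ g : G, f g ^ 2 := by rw [e1, e2]; ring
  calc d ^ 2 / N ^ 2 * ∑ g : G, ∑ h : G, f g * f h * c g h
      ≤ d ^ 2 / N ^ 2 * ((N / d) * ∑ g : G, f g ^ 2) := by
        apply mul_le_mul_of_nonneg_left _ (by positivity)
        rw [← h2]; exact h1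
    _ = d / N * ∑ g : G, f g ^ 2 := by
        field_simp
end

section
/- Let G be a finite group, let (π, V) be an irreducible unitary representation of G on a finite-dimensional complex Hilbert space V, let v ∈ V be a unit vector, and let f : G → ℝ. Then the complex number Σ_{g∈G} Σ_{h∈G} f(g)·f(h)·⟨π(g)v, π(h)v⟩² is a non-negative real number, and ((dim V)²/|G|²)·Σ_{g∈G} Σ_{h∈G} f(g)·f(h)·⟨π(g)v, π(h)v⟩² ≤ (dim V/|G|)·Σ_{g∈G} f(g)². -/
open scoped BigOperators ComplexInnerProductSpace

theorem schur_aux {G : Type} [Group G] [Fintype G]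
    {V : Type} [NormedAddCommGroup V] [InnerProductSpace ℂ V] [FiniteDimensional ℂ V]
    (π : Representation ℂ G V)
    (hunitary : ∀ (g : G) (x y : V), ⟪π g x, π g y⟫ = ⟪x, y⟫)
    (hirr : RepIrreducible π)
    (v : V) (hv : ‖v‖ = 1) (w : V) (hw : ‖w‖ = 1) :
    ∑ h : G, Complex.normSq ⟪π h v, w⟫ =
      (Fintype.card G : ℝ) / (Module.finrank ℂ V : ℝ) := by
  have hvne : v ≠ 0 := by intro h; rw [h, norm_zero] at hv; norm_num at hv
  haveI : Nontrivial V := nontrivial_of_ne v 0 hvne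
  set T : Module.End ℂ V :=
    ∑ h : G, (LinearMap.toSpanSingleton ℂ V (π h v)).comp
      ((innerSL ℂ (π h v)) : V →ₗ[ℂ] ℂ) with hTdef
  have hT : ∀ x : V, T x = ∑ h : G, ⟪π h v, x⟫ • π h v := by
    intro x
    simp [hTdef, LinearMap.sum_apply, LinearMap.toSpanSingleton_apply]
  have hcomm : ∀ (k : G) (x : V), T (π k x) = π k (T x) := by
    intro k x
    rw [hT, hT, map_sum]
    refine (Fintype.sum_equiv (Equiv.mulLeft k) _ _ fun h => ?_).symm
    have h1 : π (k * h) v = π k (π h v) := by rw [map_mul]; rfl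
    rw [Equiv.coe_mulLeft, h1, map_smul, hunitary]
  obtain ⟨μ, hμ⟩ := Module.End.exists_eigenvalue T
  have hinv : ∀ g : G, ∀ x ∈ T.eigenspace μ, π g x ∈ T.eigenspace μ := by
    intro g x hx
    rw [Module.End.mem_eigenspace_iff] at hx ⊢
    rw [hcomm, hx, map_smul]
  have htop : T.eigenspace μ = ⊤ := by
    rcases hirr _ hinv with h | h
    · exact absurd h hμ
    · exact h
  have hTx : ∀ x : V, T x = μ • x := by
    intro x
    exact Module.End.mem_eigenspace_iff.mp (htop ▸ Submodule.mem_top : x ∈ T.eigenspace μ)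
  set d := Module.finrank ℂ V with hd
  have hdpos : 0 < d := Module.finrank_pos
  set b := stdOrthonormalBasis ℂ V
  have hbnorm : ∀ i, ⟪b i, b i⟫ = 1 := fun i => by
    rw [inner_self_eq_norm_sq_to_K, b.orthonormal.1 i]; norm_num
  have hnormv : ∀ g : G, ⟪π g v, π g v⟫ = 1 := fun g => by
    rw [hunitary, inner_self_eq_norm_sq_to_K, hv]; norm_num
  -- compute the trace two ways to find μ
  have h1 : ∑ i, ⟪b i, T (b i)⟫ = (d : ℂ) * μ := by
    simp only [hTx, inner_smul_right]
    simp [hbnorm, Finset.sum_const]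
    exact Or.inl rfl
  have h2 : ∑ i, ⟪b i, T (b i)⟫ = (Fintype.card G : ℂ) := by
    have : ∀ i, ⟪b i, T (b i)⟫ = ∑ h : G, ⟪π h v, b i⟫ * ⟪b i, π h v⟫ := by
      intro i
      rw [hT, inner_sum]
      refine Finset.sum_congr rfl fun h _ => ?_
      rw [inner_smul_right]
    simp only [this]
    rw [Finset.sum_comm]
    have : ∀ h : G, ∑ i, ⟪π h v, b i⟫ * ⟪b i, π h v⟫ = 1 := fun h => by
      rw [b.sum_inner_mul_inner, hnormv]
    simp [this]
  have hμval : μ = (Fintype.card G : ℂ) / (d : ℂ) := by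
    have hdne : (d : ℂ) ≠ 0 := by exact_mod_cast hdpos.ne'
    field_simp
    rw [mul_comm, ← h1, h2]
  -- now evaluate on w
  have hw1 : ⟪w, T w⟫ = μ := by
    rw [hTx, inner_smul_right, inner_self_eq_norm_sq_to_K, hw]
    norm_num
  have hw2 : ⟪w, T w⟫ = ((∑ h : G, Complex.normSq ⟪π h v, w⟫ : ℝ) : ℂ) := by
    rw [hT, inner_sum]
    push_cast
    refine Finset.sum_congr rfl fun h _ => ?_
    rw [inner_smul_right]
    rw [← inner_conj_symm w (π h v), Complex.mul_conj]
  have := hw1.symm.trans hw2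
  rw [hμval] at this
  have : (((∑ h : G, Complex.normSq ⟪π h v, w⟫ : ℝ)) : ℂ) =
      (((Fintype.card G : ℝ) / (d : ℝ)) : ℂ) := by
    rw [← this]; push_cast; ring
  exact_mod_cast this

theorem sum4_comm {α β M : Type*} [Fintype α] [Fintype β] [AddCommMonoid M]
    (F : α → α → β → β → M) :
    ∑ g : α, ∑ h : α, ∑ i : β, ∑ j : β, F g h i j =
      ∑ i : β, ∑ j : β, ∑ h : α, ∑ g : α, F g h i j :=
  calc ∑ g : α, ∑ h : α, ∑ i : β, ∑ j : β, F g h i j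
      = ∑ h : α, ∑ g : α, ∑ i : β, ∑ j : β, F g h i j := Finset.sum_comm
    _ = ∑ h : α, ∑ i : β, ∑ g : α, ∑ j : β, F g h i j :=
        Finset.sum_congr rfl fun h _ => Finset.sum_comm
    _ = ∑ h : α, ∑ i : β, ∑ j : β, ∑ g : α, F g h i j :=
        Finset.sum_congr rfl fun h _ => Finset.sum_congr rfl fun i _ => Finset.sum_comm
    _ = ∑ i : β, ∑ h : α, ∑ j : β, ∑ g : α, F g h i j := Finset.sum_comm
    _ = ∑ i : β, ∑ j : β, ∑ h : α, ∑ g : α, F g h i j :=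
        Finset.sum_congr rfl fun i _ => Finset.sum_comm

/-- Lemma 6.1(i), second part: the double sum with squared (not absolute-squared) inner
products is a non-negative real number bounded in the same way. -/
theorem stmt_14 {G : Type} [Group G] [Fintype G]
    {V : Type} [NormedAddCommGroup V] [InnerProductSpace ℂ V] [FiniteDimensional ℂ V]
    (π : Representation ℂ G V)
    (hunitary : ∀ (g : G) (x y : V), ⟪π g x, π g y⟫ = ⟪x, y⟫)
    (hirr : RepIrreducible π)
    (v : V) (hv : ‖v‖ = 1)
    (f : G → ℝ) :
    (∑ g : G, ∑ h : G, (f g : ℂ) * (f h : ℂ) * ⟪π h v, π g v⟫ ^ 2).im = 0 ∧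
    0 ≤ (∑ g : G, ∑ h : G, (f g : ℂ) * (f h : ℂ) * ⟪π h v, π g v⟫ ^ 2).re ∧
    (Module.finrank ℂ V : ℝ) ^ 2 / (Fintype.card G : ℝ) ^ 2 *
        (∑ g : G, ∑ h : G, (f g : ℂ) * (f h : ℂ) * ⟪π h v, π g v⟫ ^ 2).re ≤
      (Module.finrank ℂ V : ℝ) / (Fintype.card G : ℝ) * ∑ g : G, f g ^ 2 := by
  have hvne : v ≠ 0 := by intro h; rw [h, norm_zero] at hv; norm_num at hv
  haveI : Nontrivial V := nontrivial_of_ne v 0 hvne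
  set d := Module.finrank ℂ V with hd
  set n := Fintype.card G with hn
  have hdpos : 0 < d := Module.finrank_pos
  have hnpos : 0 < n := Fintype.card_pos
  set S := ∑ g : G, ∑ h : G, (f g : ℂ) * (f h : ℂ) * ⟪π h v, π g v⟫ ^ 2 with hS
  set b : OrthonormalBasis (Fin d) ℂ V := stdOrthonormalBasis ℂ V with hb
  set B : Fin d → Fin d → ℂ :=
    fun i j => ∑ g : G, (f g : ℂ) * (⟪b i, π g v⟫ * ⟪b j, π g v⟫) with hB
  -- Part 1 & 2: S is a sum of |B i j|²
  have key : S = ((∑ i : Fin d, ∑ j : Fin d, Complex.normSq (B i j) : ℝ) : ℂ) := by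
    have e1 : S = ∑ g : G, ∑ h : G, ∑ i : Fin d, ∑ j : Fin d,
        ((f g : ℂ) * (f h : ℂ)) *
          ((⟪π h v, b i⟫ * ⟪b i, π g v⟫) * (⟪π h v, b j⟫ * ⟪b j, π g v⟫)) := by
      refine Finset.sum_congr rfl fun g _ => Finset.sum_congr rfl fun h _ => ?_
      rw [sq, ← b.sum_inner_mul_inner (π h v) (π g v), Finset.sum_mul_sum,
        Finset.mul_sum]
      exact Finset.sum_congr rfl fun i _ => by rw [Finset.mul_sum]
    rw [e1, sum4_comm]
    push_cast
    refine Finset.sum_congr rfl fun i _ => Finset.sum_congr rfl fun j _ => ?_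
    have hc : ((Complex.normSq (B i j) : ℝ) : ℂ) = (starRingEnd ℂ) (B i j) * B i j := by
      rw [mul_comm, Complex.mul_conj]
    rw [hc, hB]
    simp only [map_sum, map_mul, Complex.conj_ofReal, inner_conj_symm]
    rw [Finset.sum_mul_sum]
    exact Finset.sum_congr rfl fun h _ => Finset.sum_congr rfl fun g _ => by ring
  have him : S.im = 0 := by rw [key, Complex.ofReal_im]
  have hre : S.re = ∑ i : Fin d, ∑ j : Fin d, Complex.normSq (B i j) := by
    rw [key, Complex.ofReal_re]
  have hrepos : 0 ≤ S.re := by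
    rw [hre]
    exact Finset.sum_nonneg fun i _ => Finset.sum_nonneg fun j _ =>
      Complex.normSq_nonneg _
  refine ⟨him, hrepos, ?_⟩
  -- Part 3
  have hnorm1 : ∀ g : G, ‖π g v‖ = 1 := by
    intro g
    have h1 : ⟪π g v, π g v⟫ = 1 := by
      rw [hunitary, inner_self_eq_norm_sq_to_K, hv]; norm_num
    have h2 : ‖π g v‖ ^ 2 = 1 := by
      have h3 := inner_self_eq_norm_sq_to_K (𝕜 := ℂ) (π g v)
      rw [h1] at h3
      have h5 : Complex.ofReal (‖π g v‖ ^ 2) = Complex.ofReal 1 := by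
        push_cast
        exact h3.symm
      exact Complex.ofReal_injective h5
    nlinarith [norm_nonneg (π g v)]
  have hNsum1 : ∀ g : G, ∑ h : G, Complex.normSq ⟪π h v, π g v⟫ = (n : ℝ) / d :=
    fun g => schur_aux π hunitary hirr v hv (π g v) (hnorm1 g)
  have hNsum2 : ∀ h : G, ∑ g : G, Complex.normSq ⟪π h v, π g v⟫ = (n : ℝ) / d := by
    intro h
    rw [← schur_aux π hunitary hirr v hv (π h v) (hnorm1 h)]
    refine Finset.sum_congr rfl fun g _ => ?_
    rw [← inner_conj_symm (π g v) (π h v), Complex.normSq_conj]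
  have hre2 : S.re = ∑ g : G, ∑ h : G, (f g * f h) * (⟪π h v, π g v⟫ ^ 2).re := by
    rw [hS, Complex.re_sum]
    refine Finset.sum_congr rfl fun g _ => ?_
    rw [Complex.re_sum]
    refine Finset.sum_congr rfl fun h _ => ?_
    rw [show (f g : ℂ) * (f h : ℂ) * ⟪π h v, π g v⟫ ^ 2
        = ((f g * f h : ℝ) : ℂ) * ⟪π h v, π g v⟫ ^ 2 by push_cast; ring,
      Complex.re_ofReal_mul]
  have hbound : S.re ≤ ((n : ℝ) / d) * ∑ g : G, f g ^ 2 := by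
    have step1 : S.re ≤ ∑ g : G, ∑ h : G,
        ((f g ^ 2 + f h ^ 2) / 2) * Complex.normSq ⟪π h v, π g v⟫ := by
      rw [hre2]
      refine Finset.sum_le_sum fun g _ => Finset.sum_le_sum fun h _ => ?_
      set z := ⟪π h v, π g v⟫ with hz
      have habs : |(z ^ 2).re| ≤ Complex.normSq z := by
        calc |(z ^ 2).re| ≤ ‖z ^ 2‖ := Complex.abs_re_le_norm _
          _ = ‖z‖ ^ 2 := by rw [norm_pow]
          _ = Complex.normSq z := Complex.sq_norm z
      calc f g * f h * (z ^ 2).re ≤ |f g * f h * (z ^ 2).re| := le_abs_self _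
        _ = |f g| * |f h| * |(z ^ 2).re| := by rw [abs_mul, abs_mul]
        _ ≤ |f g| * |f h| * Complex.normSq z :=
            mul_le_mul_of_nonneg_left habs (by positivity)
        _ ≤ ((f g ^ 2 + f h ^ 2) / 2) * Complex.normSq z := by
            refine mul_le_mul_of_nonneg_right ?_ (Complex.normSq_nonneg z)
            nlinarith [sq_nonneg (|f g| - |f h|), sq_abs (f g), sq_abs (f h)]
    have step2 : ∑ g : G, ∑ h : G,
        ((f g ^ 2 + f h ^ 2) / 2) * Complex.normSq ⟪π h v, π g v⟫
        = ((n : ℝ) / d) * ∑ g : G, f g ^ 2 := by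
      have esplit : ∀ g h : G, ((f g ^ 2 + f h ^ 2) / 2) * Complex.normSq ⟪π h v, π g v⟫
          = (f g ^ 2 / 2) * Complex.normSq ⟪π h v, π g v⟫
            + (f h ^ 2 / 2) * Complex.normSq ⟪π h v, π g v⟫ := fun g h => by ring
      simp only [esplit, Finset.sum_add_distrib]
      have t1 : ∑ g : G, ∑ h : G, (f g ^ 2 / 2) * Complex.normSq ⟪π h v, π g v⟫
          = ((n : ℝ) / d) * ∑ g : G, f g ^ 2 / 2 := by
        rw [Finset.mul_sum]
        refine Finset.sum_congr rfl fun g _ => ?_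
        rw [← Finset.mul_sum, hNsum1]; ring
      have t2 : ∑ g : G, ∑ h : G, (f h ^ 2 / 2) * Complex.normSq ⟪π h v, π g v⟫
          = ((n : ℝ) / d) * ∑ g : G, f g ^ 2 / 2 := by
        rw [Finset.sum_comm, Finset.mul_sum]
        refine Finset.sum_congr rfl fun h _ => ?_
        rw [← Finset.mul_sum, hNsum2]; ring
      rw [t1, t2, ← mul_add]
      rw [← Finset.sum_add_distrib]
      congr 1
      refine Finset.sum_congr rfl fun g _ => ?_
      ring
    exact step1.trans_eq step2
  have hd0 : (0 : ℝ) < (d : ℝ) := by exact_mod_cast hdpos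
  have hn0 : (0 : ℝ) < (n : ℝ) := by exact_mod_cast hnpos
  calc (d : ℝ) ^ 2 / (n : ℝ) ^ 2 * S.re
      ≤ (d : ℝ) ^ 2 / (n : ℝ) ^ 2 * (((n : ℝ) / d) * ∑ g : G, f g ^ 2) :=
        mul_le_mul_of_nonneg_left hbound (by positivity)
    _ = (d : ℝ) / (n : ℝ) * ∑ g : G, f g ^ 2 := by
        field_simp
end
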